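/- arXiv:2408.12995 — 2 statements merged into one kernel-verified Lean document; each statement's English description precedes it below -/
import Mathlib

section
/- For the majority function MAJ_3 on 3 bits and p ∈ [0,1], the distributional sensitivity is 2 − 2p³ − 2(1−p)³, the distributional block sensitivity is 2 − p³ − (1−p)³, the distributional witness complexity is 2, and the distributional subcube partition and algorithmic complexities both equal 2 + 2p(1−p). -/
open Classical

noncomputable section

/-- Flip the bits of `x` in the set `B`. -/
def flipOn {ι : Type*} [DecidableEq ι] (x : ι → Bool) (B : Finset ι) : ι → Bool :=
  fun i => if i ∈ B then !(x i) else x i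

/-- Pointwise sensitivity of `f` at `x`. -/
def sensAt {ι : Type*} [Fintype ι] [DecidableEq ι] (f : (ι → Bool) → Bool)
    (x : ι → Bool) : ℕ :=
  (Finset.univ.filter fun i => f (flipOn x {i}) ≠ f x).card

/-- Pointwise block sensitivity of `f` at `x`. -/
def bsAt {ι : Type*} [DecidableEq ι] (f : (ι → Bool) → Bool) (x : ι → Bool) : ℕ :=
  sSup {m | ∃ B : Fin m → Finset ι,
    (∀ j, f (flipOn x (B j)) ≠ f x) ∧ ∀ j k, j ≠ k → Disjoint (B j) (B k)}

/-- `W` is a witness set for `f` at `x`. -/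
def IsWitness {ι : Type*} (f : (ι → Bool) → Bool) (x : ι → Bool) (W : Finset ι) : Prop :=
  ∀ y, (∀ i ∈ W, y i = x i) → f y = f x

/-- Pointwise minimum witness size of `f` at `x`. -/
def witAt {ι : Type*} (f : (ι → Bool) → Bool) (x : ι → Bool) : ℕ :=
  sInf {k | ∃ W : Finset ι, W.card = k ∧ IsWitness f x W}

/-- Decision trees querying coordinates in `ι`. -/
inductive DTree (ι : Type*) where
  | leaf : DTree ι
  | node : ι → DTree ι → DTree ι → DTree ι

/-- The set of coordinates queried by the tree `T` on input `x`. -/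
def DTree.path {ι : Type*} [DecidableEq ι] : DTree ι → (ι → Bool) → Finset ι
  | .leaf, _ => ∅
  | .node i t0 t1, x => insert i (if x i then t1.path x else t0.path x)

/-- The tree `T` determines `f`: at each leaf the queried bits witness the value of `f`. -/
def DTree.Determines {ι : Type*} [DecidableEq ι] (T : DTree ι)
    (f : (ι → Bool) → Bool) : Prop :=
  ∀ x, IsWitness f x (T.path x)

/-- A partition of the hypercube into subcubes, encoded by the map sending each point to
the code (fixed coordinates) of its part. -/
structure SubcubePartition (ι : Type*) where
  code : (ι → Bool) → (ι → Option Bool)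
  self_mem : ∀ x i b, code x i = some b → x i = b
  compat : ∀ x y, (∀ i b, code x i = some b → y i = b) → code y = code x

/-- Number of coordinates fixed by the subcube containing `x`. -/
def SubcubePartition.codim {ι : Type*} [Fintype ι] (P : SubcubePartition ι)
    (x : ι → Bool) : ℕ :=
  (Finset.univ.filter fun i => (P.code x i).isSome).card

/-- The partition determines `f`, i.e. `f` is constant on each part. -/
def SubcubePartition.Determines {ι : Type*} (P : SubcubePartition ι)
    (f : (ι → Bool) → Bool) : Prop :=
  ∀ x y, (∀ i b, P.code x i = some b → y i = b) → f y = f x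

/-- Deterministic sensitivity. -/
def detSens {ι : Type*} [Fintype ι] [DecidableEq ι] (f : (ι → Bool) → Bool) : ℕ :=
  Finset.univ.sup fun x => sensAt f x

/-- Deterministic block sensitivity. -/
def detBS {ι : Type*} [Fintype ι] [DecidableEq ι] (f : (ι → Bool) → Bool) : ℕ :=
  Finset.univ.sup fun x => bsAt f x

/-- Deterministic witness complexity. -/
def detWit {ι : Type*} [Fintype ι] [DecidableEq ι] (f : (ι → Bool) → Bool) : ℕ :=
  Finset.univ.sup fun x => witAt f x

/-- Deterministic subcube partition complexity. -/
def detSC {ι : Type*} [Fintype ι] (f : (ι → Bool) → Bool) : ℕ :=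
  sInf {k | ∃ P : SubcubePartition ι, P.Determines f ∧ ∀ x, P.codim x ≤ k}

/-- Deterministic algorithmic (decision tree) complexity. -/
def detAlg {ι : Type*} [Fintype ι] [DecidableEq ι] (f : (ι → Bool) → Bool) : ℕ :=
  sInf {k | ∃ T : DTree ι, T.Determines f ∧ ∀ x, (T.path x).card ≤ k}

/-- Weight of the configuration `x` under the product Bernoulli(p) measure `π_p`. -/
def wt {ι : Type*} [Fintype ι] (p : ℝ) (x : ι → Bool) : ℝ :=
  ∏ i, (if x i then p else 1 - p)

/-- Expectation under `π_p`. -/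
def expec {ι : Type*} [Fintype ι] [DecidableEq ι] (p : ℝ) (g : (ι → Bool) → ℝ) : ℝ :=
  ∑ x, wt p x * g x

/-- Distributional sensitivity. -/
def distSens {ι : Type*} [Fintype ι] [DecidableEq ι] (f : (ι → Bool) → Bool) (p : ℝ) : ℝ :=
  expec p fun x => (sensAt f x : ℝ)

/-- Distributional block sensitivity. -/
def distBS {ι : Type*} [Fintype ι] [DecidableEq ι] (f : (ι → Bool) → Bool) (p : ℝ) : ℝ :=
  expec p fun x => (bsAt f x : ℝ)

/-- Distributional witness complexity. -/
def distWit {ι : Type*} [Fintype ι] [DecidableEq ι] (f : (ι → Bool) → Bool) (p : ℝ) : ℝ :=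
  expec p fun x => (witAt f x : ℝ)

/-- Distributional subcube partition complexity. -/
def distSC {ι : Type*} [Fintype ι] [DecidableEq ι] (f : (ι → Bool) → Bool) (p : ℝ) : ℝ :=
  sInf {c | ∃ P : SubcubePartition ι, P.Determines f ∧
    c = expec p fun x => (P.codim x : ℝ)}

/-- Distributional algorithmic complexity. -/
def distAlg {ι : Type*} [Fintype ι] [DecidableEq ι] (f : (ι → Bool) → Bool) (p : ℝ) : ℝ :=
  sInf {c | ∃ T : DTree ι, T.Determines f ∧
    c = expec p fun x => ((T.path x).card : ℝ)}

/-- `μ x J` is the joint probability that the bits equal `x` and the random set equals `J`;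
the conditions say: the marginal of the bits is `π_p`, the random set is a.s. a witness set
for `f`, and the random set is local (conditionally on `{I = J}` and the bits on `J`, the
bits outside `J` are still i.i.d. Bernoulli(p)). -/
def IsLocalWitnessSystem {ι : Type*} [Fintype ι] [DecidableEq ι]
    (f : (ι → Bool) → Bool) (p : ℝ) (μ : (ι → Bool) → Finset ι → ℝ) : Prop :=
  (∀ x J, 0 ≤ μ x J) ∧
  (∀ x, ∑ J, μ x J = wt p x) ∧
  (∀ x J, μ x J ≠ 0 → IsWitness f x J) ∧
  (∀ (J : Finset ι) x y, (∀ i ∈ J, x i = y i) → μ x J * wt p y = μ y J * wt p x)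

/-- Distributional local witness complexity. -/
def distLocal {ι : Type*} [Fintype ι] [DecidableEq ι]
    (f : (ι → Bool) → Bool) (p : ℝ) : ℝ :=
  sInf {c | ∃ μ : (ι → Bool) → Finset ι → ℝ, IsLocalWitnessSystem f p μ ∧
    c = ∑ x, ∑ J, μ x J * (J.card : ℝ)}

/-- The majority function on 3 bits. -/
def MAJ3 : (Fin 3 → Bool) → Bool := fun x => (x 0 && x 1) || (x 0 && x 2) || (x 1 && x 2)

/-!
Every point of the cube has a witness of size two and none smaller, so all pointwise
quantities are read off the two unanimous points and the two layers of points `oddOne b i`.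
For the lower bound on subcube partitions, every subcube has codimension at least two, and in
each layer at most one point lies in a subcube of codimension two: such a subcube must be the
unique witness `{i}ᶜ` of `oddOne b i`, and two of them in the same layer meet at the unanimous
point `fun _ => b`. The decision tree that queries `x 2` only when `x 0 ≠ x 1` attains the bound,
and every decision tree induces a subcube partition of the same cost.
-/

@[simp]
theorem flipOn_empty {ι : Type*} [DecidableEq ι] (x : ι → Bool) : flipOn x ∅ = x := by
  funext i
  simp [flipOn]

section BlockSensitivity

variable {ι : Type*} [DecidableEq ι]

/-- The families of blocks counted by `bsAt`. -/
def IsSensitiveBlockFamily (f : (ι → Bool) → Bool) (x : ι → Bool) {m : ℕ}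
    (B : Fin m → Finset ι) : Prop :=
  (∀ j, f (flipOn x (B j)) ≠ f x) ∧ ∀ j k, j ≠ k → Disjoint (B j) (B k)

theorem IsSensitiveBlockFamily.le_card [Fintype ι] {f : (ι → Bool) → Bool} {x : ι → Bool}
    {m : ℕ} {B : Fin m → Finset ι} (hB : IsSensitiveBlockFamily f x B) :
    m ≤ Fintype.card ι := by
  have hne : ∀ j, (B j).Nonempty := fun j => by
    by_contra h
    apply hB.1 j
    simp [Finset.not_nonempty_iff_eq_empty.mp h]
  calc m = ∑ _j : Fin m, 1 := by simp
    _ ≤ ∑ j, (B j).card := Finset.sum_le_sum fun j _ => (hne j).card_pos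
    _ = (Finset.univ.biUnion B).card :=
      (Finset.card_biUnion fun j _ k _ hjk => hB.2 j k hjk).symm
    _ ≤ Fintype.card ι := Finset.card_le_univ _

theorem le_bsAt [Fintype ι] {f : (ι → Bool) → Bool} {x : ι → Bool} {m : ℕ}
    {B : Fin m → Finset ι} (hB : IsSensitiveBlockFamily f x B) : m ≤ bsAt f x :=
  le_csSup ⟨Fintype.card ι, fun _ ⟨_, hB'⟩ => IsSensitiveBlockFamily.le_card hB'⟩ ⟨B, hB⟩

theorem bsAt_le {f : (ι → Bool) → Bool} {x : ι → Bool} {n : ℕ}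
    (h : ∀ B : Fin (n + 1) → Finset ι, ¬IsSensitiveBlockFamily f x B) : bsAt f x ≤ n := by
  refine csSup_le ⟨0, Fin.elim0, fun j => j.elim0, fun j => j.elim0⟩ ?_
  rintro m ⟨B, hB⟩
  by_contra! hnm
  exact h (B ∘ Fin.castLE hnm)
    ⟨fun j => hB.1 _, fun j k hjk => hB.2 _ _ ((Fin.castLE_injective hnm).ne hjk)⟩

end BlockSensitivity

theorem witAt_eq_card {ι : Type*} {f : (ι → Bool) → Bool} {x : ι → Bool} {W : Finset ι}
    (hW : IsWitness f x W) (hmin : ∀ V, IsWitness f x V → W.card ≤ V.card) :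
    witAt f x = W.card :=
  le_antisymm (Nat.sInf_le ⟨W, rfl, hW⟩) (le_csInf ⟨_, W, rfl, hW⟩ fun _ ⟨V, hV, hVw⟩ =>
    hV ▸ hmin V hVw)

namespace SubcubePartition

variable {ι : Type*} [Fintype ι] (P : SubcubePartition ι)

def fixed (x : ι → Bool) : Finset ι :=
  Finset.univ.filter fun i => (P.code x i).isSome

theorem mem_fixed_of_code_eq_some {x : ι → Bool} {i : ι} {b : Bool} (h : P.code x i = some b) :
    i ∈ P.fixed x :=
  Finset.mem_filter.mpr ⟨Finset.mem_univ i, by simp [h]⟩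

theorem code_eq_of_agree_on_fixed {x z : ι → Bool} (h : ∀ i ∈ P.fixed x, z i = x i) :
    P.code z = P.code x :=
  P.compat x z fun i b hb => by
    rw [h i (P.mem_fixed_of_code_eq_some hb), P.self_mem x i b hb]

theorem isWitness_fixed {f : (ι → Bool) → Bool} (hP : P.Determines f) (x : ι → Bool) :
    IsWitness f x (P.fixed x) := fun y hy =>
  hP x y fun i b hb => by rw [hy i (P.mem_fixed_of_code_eq_some hb), P.self_mem x i b hb]

/-- Two subcubes of a partition that share a point coincide. -/
theorem fixed_eq_of_agree_on_fixed {x y z : ι → Bool} (hx : ∀ i ∈ P.fixed x, z i = x i)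
    (hy : ∀ i ∈ P.fixed y, z i = y i) : P.fixed x = P.fixed y := by
  simp only [fixed, ← P.code_eq_of_agree_on_fixed hx, P.code_eq_of_agree_on_fixed hy]

end SubcubePartition

namespace DTree

variable {ι : Type*} [DecidableEq ι]

theorem path_eq_of_agree (T : DTree ι) {x y : ι → Bool} (h : ∀ i ∈ T.path x, y i = x i) :
    T.path y = T.path x := by
  induction T with
  | leaf => rfl
  | node i t0 t1 ih0 ih1 =>
    have hi : y i = x i := h i (Finset.mem_insert_self _ _)
    have hsub : ∀ j ∈ (if x i then t1.path x else t0.path x), y j = x j :=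
      fun j hj => h j (Finset.mem_insert_of_mem hj)
    cases hxi : x i with
    | false =>
      simp only [hxi, Bool.false_eq_true, if_false] at hsub
      simp [path, hi, hxi, ih0 hsub]
    | true =>
      simp only [hxi, if_true] at hsub
      simp [path, hi, hxi, ih1 hsub]

/-- The leaves of a decision tree partition the cube into subcubes. -/
def toSubcubePartition (T : DTree ι) : SubcubePartition ι where
  code x i := if i ∈ T.path x then some (x i) else none
  self_mem x i b h := by
    split_ifs at h with hi
    exact Option.some.inj h
  compat x y h := by
    have hagree : ∀ i ∈ T.path x, y i = x i := fun i hi => h i (x i) (by simp [hi])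
    funext i
    by_cases hi : i ∈ T.path x <;> simp [T.path_eq_of_agree hagree, hi, hagree i]

theorem codim_toSubcubePartition [Fintype ι] (T : DTree ι) (x : ι → Bool) :
    T.toSubcubePartition.codim x = (T.path x).card := by
  simp [SubcubePartition.codim, toSubcubePartition]

theorem Determines.toSubcubePartition {T : DTree ι} {f : (ι → Bool) → Bool}
    (hT : T.Determines f) : T.toSubcubePartition.Determines f :=
  fun x y h => hT x y fun i hi => h i (x i) (by simp [DTree.toSubcubePartition, hi])

end DTree

theorem sum_fin_three_bool {M : Type*} [AddCommMonoid M] (g : (Fin 3 → Bool) → M) :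
    ∑ x, g x = ∑ a : Bool, ∑ b : Bool, ∑ c : Bool, g ![a, b, c] := by
  rw [← (Fin.consEquiv fun _ => Bool).sum_comp, Fintype.sum_prod_type]
  refine Fintype.sum_congr _ _ fun a => ?_
  rw [← (Fin.consEquiv fun _ => Bool).sum_comp, Fintype.sum_prod_type]
  refine Fintype.sum_congr _ _ fun b => ?_
  rw [← (Fin.consEquiv fun _ => Bool).sum_comp, Fintype.sum_prod_type]
  refine Fintype.sum_congr _ _ fun c => ?_
  simp only [Fintype.sum_unique]
  congr 1

def oddOne (b : Bool) (i : Fin 3) : Fin 3 → Bool :=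
  Function.update (fun _ => b) i (!b)

theorem expec_fin_three (p : ℝ) (g : (Fin 3 → Bool) → ℝ) :
    expec p g = (1 - p) ^ 3 * g (fun _ => false) + p * (1 - p) ^ 2 * ∑ i, g (oddOne false i)
      + p ^ 2 * (1 - p) * ∑ i, g (oddOne true i) + p ^ 3 * g (fun _ => true) := by
  have hconst : ∀ b : Bool, (fun _ => b) = ![b, b, b] := by decide
  have hodd : ∀ b : Bool,
      oddOne b 0 = ![!b, b, b] ∧ oddOne b 1 = ![b, !b, b] ∧ oddOne b 2 = ![b, b, !b] := by
    decide
  simp only [expec, sum_fin_three_bool, Fin.sum_univ_three, hconst, hodd]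
  simp [wt, Fin.prod_univ_three]
  ring

theorem sensAt_MAJ3_const (b : Bool) : sensAt MAJ3 (fun _ => b) = 0 := by
  revert b; decide

theorem sensAt_MAJ3_oddOne (b : Bool) (i : Fin 3) : sensAt MAJ3 (oddOne b i) = 2 := by
  revert b i; decide

/-- At a unanimous point a sensitive block must flip at least two coordinates. -/
theorem bsAt_MAJ3_const (b : Bool) : bsAt MAJ3 (fun _ => b) = 1 := by
  have hupper : ∀ b (B : Fin 2 → Finset (Fin 3)),
      ¬IsSensitiveBlockFamily MAJ3 (fun _ => b) B := by
    unfold IsSensitiveBlockFamily; decide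
  have hlower : ∀ b, IsSensitiveBlockFamily MAJ3 (fun _ => b) ![Finset.univ] := by
    unfold IsSensitiveBlockFamily; decide
  exact le_antisymm (bsAt_le (hupper b)) (le_bsAt (hlower b))

set_option maxRecDepth 4000 in
/-- At `oddOne b i` a sensitive block must flip one of the two coordinates equal to `b`. -/
theorem bsAt_MAJ3_oddOne (b : Bool) (i : Fin 3) : bsAt MAJ3 (oddOne b i) = 2 := by
  have hupper : ∀ b i (B : Fin 3 → Finset (Fin 3)),
      ¬IsSensitiveBlockFamily MAJ3 (oddOne b i) B := by
    unfold IsSensitiveBlockFamily; decide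
  have hlower : ∀ b i, ∃ B : Fin 2 → Finset (Fin 3),
      IsSensitiveBlockFamily MAJ3 (oddOne b i) B := by
    unfold IsSensitiveBlockFamily; decide
  obtain ⟨B, hB⟩ := hlower b i
  exact le_antisymm (bsAt_le (hupper b i)) (le_bsAt hB)

theorem two_le_card_of_isWitness_MAJ3 {x : Fin 3 → Bool} {W : Finset (Fin 3)}
    (hW : IsWitness MAJ3 x W) : 2 ≤ W.card := by
  revert x W; unfold IsWitness; decide

theorem witAt_MAJ3 (x : Fin 3 → Bool) : witAt MAJ3 x = 2 := by
  obtain ⟨W, hcard, hW⟩ : ∃ W : Finset (Fin 3), W.card = 2 ∧ IsWitness MAJ3 x W := by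
    revert x; unfold IsWitness; decide
  exact hcard ▸ witAt_eq_card hW fun V hV => hcard ▸ two_le_card_of_isWitness_MAJ3 hV

theorem eq_compl_singleton_of_isWitness_MAJ3_oddOne {b : Bool} {i : Fin 3} {W : Finset (Fin 3)}
    (hW : IsWitness MAJ3 (oddOne b i) W) (hcard : W.card ≤ 2) : W = {i}ᶜ := by
  revert b i W; unfold IsWitness; decide

namespace SubcubePartition

variable {P : SubcubePartition (Fin 3)} (hP : P.Determines MAJ3)
include hP

theorem two_le_codim_of_determines_MAJ3 (x : Fin 3 → Bool) : 2 ≤ P.codim x :=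
  two_le_card_of_isWitness_MAJ3 (P.isWitness_fixed hP x)

/-- If both codimensions were `2`, the subcubes of `oddOne b i` and `oddOne b j` would be the
distinct subcubes fixing `{i}ᶜ` and `{j}ᶜ` at `b`, yet both contain the point `fun _ => b`. -/
theorem five_le_codim_oddOne_add_codim_oddOne (b : Bool) {i j : Fin 3} (hij : i ≠ j) :
    5 ≤ P.codim (oddOne b i) + P.codim (oddOne b j) := by
  by_contra! h
  have hfixed : ∀ k, P.codim (oddOne b k) ≤ 2 → P.fixed (oddOne b k) = {k}ᶜ := fun k hk =>
    eq_compl_singleton_of_isWitness_MAJ3_oddOne (P.isWitness_fixed hP _) hk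
  have hi := hfixed i (by have := two_le_codim_of_determines_MAJ3 hP (oddOne b j); omega)
  have hj := hfixed j (by have := two_le_codim_of_determines_MAJ3 hP (oddOne b i); omega)
  have hagree : ∀ k, ∀ l ∈ ({k}ᶜ : Finset (Fin 3)), b = oddOne b k l :=
    fun k l hl => by rw [oddOne, Function.update_of_ne (by simpa using hl)]
  have := P.fixed_eq_of_agree_on_fixed (z := fun _ => b) (hi ▸ hagree i) (hj ▸ hagree j)
  rw [hi, hj, compl_inj_iff, Finset.singleton_inj] at this
  exact hij this

theorem eight_le_sum_codim_oddOne (b : Bool) : 8 ≤ ∑ i, P.codim (oddOne b i) := by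
  have h01 := five_le_codim_oddOne_add_codim_oddOne hP b (i := 0) (j := 1) (by decide)
  have h02 := five_le_codim_oddOne_add_codim_oddOne hP b (i := 0) (j := 2) (by decide)
  have h12 := five_le_codim_oddOne_add_codim_oddOne hP b (i := 1) (j := 2) (by decide)
  rw [Fin.sum_univ_three]
  omega

theorem le_expec_codim_of_determines_MAJ3 {p : ℝ} (hp0 : 0 ≤ p) (hp1 : p ≤ 1) :
    2 + 2 * p * (1 - p) ≤ expec p fun x => (P.codim x : ℝ) := by
  have hq : 0 ≤ 1 - p := by linarith
  have hconst (b : Bool) : (2 : ℝ) ≤ P.codim (fun _ => b) := by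
    exact_mod_cast two_le_codim_of_determines_MAJ3 hP _
  have hodd (b : Bool) : (8 : ℝ) ≤ ∑ i, (P.codim (oddOne b i) : ℝ) := by
    exact_mod_cast eight_le_sum_codim_oddOne hP b
  rw [expec_fin_three]
  calc 2 + 2 * p * (1 - p)
      = (1 - p) ^ 3 * 2 + p * (1 - p) ^ 2 * 8 + p ^ 2 * (1 - p) * 8 + p ^ 3 * 2 := by ring
    _ ≤ _ := by gcongr <;> first | exact hconst _ | exact hodd _

end SubcubePartition

/-- Query `x 0` and `x 1`, and then `x 2` only if they disagree. -/
def maj3Tree : DTree (Fin 3) :=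
  .node 0 (.node 1 .leaf (.node 2 .leaf .leaf)) (.node 1 (.node 2 .leaf .leaf) .leaf)

theorem maj3Tree_determines : maj3Tree.Determines MAJ3 := by
  unfold DTree.Determines IsWitness; decide

theorem expec_card_path_maj3Tree (p : ℝ) :
    (expec p fun x => ((maj3Tree.path x).card : ℝ)) = 2 + 2 * p * (1 - p) := by
  have hconst : ∀ b, (maj3Tree.path (fun _ => b)).card = 2 := by decide
  have hodd : ∀ b, ∑ i, (maj3Tree.path (oddOne b i)).card = 8 := by decide
  have hodd' (b : Bool) : ∑ i, ((maj3Tree.path (oddOne b i)).card : ℝ) = 8 := by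
    exact_mod_cast hodd b
  rw [expec_fin_three, hodd', hodd', hconst, hconst]
  push_cast
  ring

theorem distSens_MAJ3 (p : ℝ) : distSens MAJ3 p = 2 - 2 * p ^ 3 - 2 * (1 - p) ^ 3 := by
  simp only [distSens, expec_fin_three, sensAt_MAJ3_const, sensAt_MAJ3_oddOne]
  push_cast
  ring

theorem distBS_MAJ3 (p : ℝ) : distBS MAJ3 p = 2 - p ^ 3 - (1 - p) ^ 3 := by
  simp only [distBS, expec_fin_three, bsAt_MAJ3_const, bsAt_MAJ3_oddOne]
  push_cast
  ring

theorem distWit_MAJ3 (p : ℝ) : distWit MAJ3 p = 2 := by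
  simp only [distWit, expec_fin_three, witAt_MAJ3]
  push_cast
  ring

theorem distSC_MAJ3 {p : ℝ} (hp0 : 0 ≤ p) (hp1 : p ≤ 1) :
    distSC MAJ3 p = 2 + 2 * p * (1 - p) := by
  refine IsLeast.csInf_eq ⟨⟨maj3Tree.toSubcubePartition,
    maj3Tree_determines.toSubcubePartition, ?_⟩, ?_⟩
  · simp only [DTree.codim_toSubcubePartition, expec_card_path_maj3Tree]
  · rintro c ⟨P, hP, rfl⟩
    exact SubcubePartition.le_expec_codim_of_determines_MAJ3 hP hp0 hp1

theorem distAlg_MAJ3 {p : ℝ} (hp0 : 0 ≤ p) (hp1 : p ≤ 1) :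
    distAlg MAJ3 p = 2 + 2 * p * (1 - p) := by
  refine IsLeast.csInf_eq ⟨⟨maj3Tree, maj3Tree_determines, (expec_card_path_maj3Tree p).symm⟩, ?_⟩
  rintro c ⟨T, hT, rfl⟩
  simpa only [DTree.codim_toSubcubePartition] using
    SubcubePartition.le_expec_codim_of_determines_MAJ3 hT.toSubcubePartition hp0 hp1

/-- the distributional complexities of `MAJ_3`. -/
theorem maj3_dist_complexities (p : ℝ) (hp0 : 0 ≤ p) (hp1 : p ≤ 1) :
    distSens MAJ3 p = 2 - 2 * p ^ 3 - 2 * (1 - p) ^ 3 ∧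
    distBS MAJ3 p = 2 - p ^ 3 - (1 - p) ^ 3 ∧
    distWit MAJ3 p = 2 ∧
    distSC MAJ3 p = 2 + 2 * p * (1 - p) ∧
    distAlg MAJ3 p = 2 + 2 * p * (1 - p) :=
  ⟨distSens_MAJ3 p, distBS_MAJ3 p, distWit_MAJ3 p, distSC_MAJ3 hp0 hp1, distAlg_MAJ3 hp0 hp1⟩
end
end

section
/- Let f be a monotone, non-constant Boolean function on n bits and p ∈ (0,1). Then sc(f,π_p) = w(f,π_p) if and only if f is a dictator function, i.e., f(x) = x_i for some i ∈ [n]. -/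
open Classical

noncomputable section

set_option linter.unusedSectionVars false
section Aux
variable {ι : Type*} [Fintype ι] [DecidableEq ι]

lemma wt_nonneg {p : ℝ} (hp0 : 0 < p) (hp1 : p < 1) (x : ι → Bool) : 0 ≤ wt p x :=
  Finset.prod_nonneg fun i _ => by split <;> linarith

lemma wt_ge {p : ℝ} (hp0 : 0 < p) (hp1 : p < 1) (x : ι → Bool) :
    (min p (1 - p)) ^ (Fintype.card ι) ≤ wt p x := by
  rw [← Finset.card_univ, ← Finset.prod_const]
  refine Finset.prod_le_prod (fun i _ => le_min hp0.le (by linarith)) (fun i _ => ?_)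
  split
  · exact min_le_left _ _
  · exact min_le_right _ _

lemma sum_wt {p : ℝ} : ∑ x : ι → Bool, wt p x = 1 := by
  have h := Finset.prod_univ_sum (fun _ : ι => (Finset.univ : Finset Bool))
    (fun _ b => if b then p else 1 - p)
  simp only [Fintype.piFinset_univ] at h
  unfold wt
  rw [← h]
  simp

end Aux
section Aux2
variable {ι : Type*} [Fintype ι] [DecidableEq ι]

lemma witAt_le {f : (ι → Bool) → Bool} {x : ι → Bool} {W : Finset ι}
    (h : IsWitness f x W) : witAt f x ≤ W.card :=
  Nat.sInf_le ⟨W, rfl, h⟩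

lemma codim_witness (P : SubcubePartition ι) (hdet : P.Determines f) :
    ∀ x : ι → Bool, IsWitness f x (Finset.univ.filter fun i => (P.code x i).isSome) := by
  intro x y hy
  apply hdet x y
  intro i b hb
  have hi : i ∈ Finset.univ.filter fun i => (P.code x i).isSome :=
    Finset.mem_filter.mpr ⟨Finset.mem_univ _, by rw [hb]; rfl⟩
  rw [hy i hi]
  exact P.self_mem x i b hb

lemma witAt_le_codim {f : (ι → Bool) → Bool} (P : SubcubePartition ι)
    (hdet : P.Determines f) (x : ι → Bool) : witAt f x ≤ P.codim x :=
  witAt_le (codim_witness P hdet x)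

lemma witness_subset_true {f : (ι → Bool) → Bool}
    (hmono : ∀ x y : ι → Bool, (∀ i, x i = true → y i = true) → f x = true → f y = true)
    {x : ι → Bool} {W : Finset ι}
    (hw : IsWitness f x W) (hcard : W.card ≤ witAt f x) (hfx : f x = true) :
    ∀ i ∈ W, x i = true := by
  set W' := W.filter (fun i => x i = true) with hW'def
  have hW'wit : IsWitness f x W' := by
    intro y hy
    rw [hfx]
    apply hmono (fun i => if i ∈ W then x i else false) y
    · intro i hi
      by_cases hiW : i ∈ W
      · rw [if_pos hiW] at hi
        have hiW' : i ∈ W' := Finset.mem_filter.mpr ⟨hiW, hi⟩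
        rw [hy i hiW']; exact hi
      · rw [if_neg hiW] at hi; exact absurd hi (by simp)
    · rw [hw (fun i => if i ∈ W then x i else false) (fun i hi => if_pos hi)]
      exact hfx
  have h1 : witAt f x ≤ W'.card := witAt_le hW'wit
  have h2 : W'.card ≤ W.card := Finset.card_filter_le _ _
  have hWW : W' = W :=
    Finset.eq_of_subset_of_card_le (Finset.filter_subset _ _) (by omega)
  intro i hi
  rw [← hWW] at hi
  exact (Finset.mem_filter.mp hi).2

lemma witness_subset_false {f : (ι → Bool) → Bool}
    (hmono : ∀ x y : ι → Bool, (∀ i, x i = true → y i = true) → f x = true → f y = true)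
    {x : ι → Bool} {W : Finset ι}
    (hw : IsWitness f x W) (hcard : W.card ≤ witAt f x) (hfx : f x = false) :
    ∀ i ∈ W, x i = false := by
  set W' := W.filter (fun i => x i = false) with hW'def
  have hW'wit : IsWitness f x W' := by
    intro y hy
    rw [hfx]
    have hz : f (fun i => if i ∈ W then x i else true) = false := by
      rw [hw (fun i => if i ∈ W then x i else true) (fun i hi => if_pos hi)]
      exact hfx
    cases hfy : f y with
    | false => rfl
    | true =>
      exfalso
      have hle : ∀ i, y i = true → (fun i => if i ∈ W then x i else true) i = true := by
        intro i hyi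
        by_cases hiW : i ∈ W
        · simp only [if_pos hiW]
          cases hxi : x i with
          | true => rfl
          | false =>
            have hiW' : i ∈ W' := Finset.mem_filter.mpr ⟨hiW, hxi⟩
            rw [hy i hiW', hxi] at hyi; exact absurd hyi (by simp)
        · simp only [if_neg hiW]
      have := hmono y (fun i => if i ∈ W then x i else true) hle hfy
      rw [hz] at this
      exact Bool.false_ne_true this
  have h1 : witAt f x ≤ W'.card := witAt_le hW'wit
  have h2 : W'.card ≤ W.card := Finset.card_filter_le _ _
  have hWW : W' = W :=
    Finset.eq_of_subset_of_card_le (Finset.filter_subset _ _) (by omega)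
  intro i hi
  rw [← hWW] at hi
  exact (Finset.mem_filter.mp hi).2

end Aux2
section Aux3
variable {ι : Type*} [Fintype ι] [DecidableEq ι]

lemma f_one_true {f : (ι → Bool) → Bool}
    (hmono : ∀ x y : ι → Bool, (∀ i, x i = true → y i = true) → f x = true → f y = true)
    (hnc : ∃ x y, f x ≠ f y) : f (fun _ => true) = true := by
  cases h1 : f (fun _ => true) with
  | true => rfl
  | false =>
    exfalso
    obtain ⟨x, y, hxy⟩ := hnc
    have hall : ∀ z, f z = false := by
      intro z
      cases hz : f z with
      | false => rfl
      | true =>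
        have := hmono z (fun _ => true) (fun i _ => rfl) hz
        rw [h1] at this; exact absurd this (by simp)
    rw [hall x, hall y] at hxy; exact hxy rfl

lemma f_zero_false {f : (ι → Bool) → Bool}
    (hmono : ∀ x y : ι → Bool, (∀ i, x i = true → y i = true) → f x = true → f y = true)
    (hnc : ∃ x y, f x ≠ f y) : f (fun _ => false) = false := by
  cases h0 : f (fun _ => false) with
  | false => rfl
  | true =>
    exfalso
    obtain ⟨x, y, hxy⟩ := hnc
    have hall : ∀ z, f z = true := fun z =>
      hmono (fun _ => false) z (fun i h => absurd h (by simp)) h0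
    rw [hall x, hall y] at hxy; exact hxy rfl

lemma dict_of_tight {f : (ι → Bool) → Bool}
    (hmono : ∀ x y : ι → Bool, (∀ i, x i = true → y i = true) → f x = true → f y = true)
    (hnc : ∃ x y, f x ≠ f y)
    (P : SubcubePartition ι) (hdet : P.Determines f)
    (heq : ∀ x, P.codim x = witAt f x) :
    ∃ i : ι, ∀ x, f x = x i := by
  classical
  set C : (ι → Bool) → Finset ι :=
    fun x => Finset.univ.filter fun i => (P.code x i).isSome with hCdef
  have hCwit : ∀ x, IsWitness f x (C x) := codim_witness P hdet
  have hCcard : ∀ x, (C x).card ≤ witAt f x := fun x => le_of_eq (heq x)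
  have hsub1 : ∀ x, f x = true → ∀ i ∈ C x, x i = true := fun x hx =>
    witness_subset_true hmono (hCwit x) (hCcard x) hx
  have hsub0 : ∀ x, f x = false → ∀ i ∈ C x, x i = false := fun x hx =>
    witness_subset_false hmono (hCwit x) (hCcard x) hx
  set one : ι → Bool := fun _ => true with hone
  set zero : ι → Bool := fun _ => false with hzero
  have f1 : f one = true := f_one_true hmono hnc
  have f0 : f zero = false := f_zero_false hmono hnc
  set B : Finset ι := C one with hBdef
  set A : Finset ι := C zero with hAdef
  -- code of any 1-point equals code of `one`
  have hcode1 : ∀ x, f x = true → P.code x = P.code one := by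
    intro x hx
    refine (P.compat x one ?_).symm
    intro i b hb
    have hi : i ∈ C x := Finset.mem_filter.mpr ⟨Finset.mem_univ _, by rw [hb]; rfl⟩
    have hxb : x i = b := P.self_mem x i b hb
    have : x i = true := hsub1 x hx i hi
    rw [← hxb, this]
  have hcode0 : ∀ x, f x = false → P.code x = P.code zero := by
    intro x hx
    refine (P.compat x zero ?_).symm
    intro i b hb
    have hi : i ∈ C x := Finset.mem_filter.mpr ⟨Finset.mem_univ _, by rw [hb]; rfl⟩
    have hxb : x i = b := P.self_mem x i b hb
    have : x i = false := hsub0 x hx i hi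
    rw [← hxb, this]
  -- the codes on B are `some true`, on A `some false`
  have hBsome : ∀ i ∈ B, P.code one i = some true := by
    intro i hi
    have hs : (P.code one i).isSome := (Finset.mem_filter.mp hi).2
    obtain ⟨b, hb⟩ := Option.isSome_iff_exists.mp hs
    have := P.self_mem one i b hb
    rw [hb, ← this]
  have hAsome : ∀ i ∈ A, P.code zero i = some false := by
    intro i hi
    have hs : (P.code zero i).isSome := (Finset.mem_filter.mp hi).2
    obtain ⟨b, hb⟩ := Option.isSome_iff_exists.mp hs
    have := P.self_mem zero i b hb
    rw [hb, ← this]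
  have hBiff : ∀ x, (f x = true ↔ ∀ i ∈ B, x i = true) := by
    intro x
    constructor
    · intro hx i hi
      have hc := hcode1 x hx
      have : P.code x i = some true := by rw [hc]; exact hBsome i hi
      exact P.self_mem x i true this
    · intro hx
      have := hdet one x ?_
      · rw [this, f1]
      · intro i b hb
        have hi : i ∈ B := Finset.mem_filter.mpr ⟨Finset.mem_univ _, by rw [hb]; rfl⟩
        have : b = true := by
          have := hBsome i hi; rw [this] at hb; injection hb with h; exact h.symm
        rw [this]; exact hx i hi
  have hAiff : ∀ x, (f x = false ↔ ∀ i ∈ A, x i = false) := by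
    intro x
    constructor
    · intro hx i hi
      have hc := hcode0 x hx
      have : P.code x i = some false := by rw [hc]; exact hAsome i hi
      exact P.self_mem x i false this
    · intro hx
      have := hdet zero x ?_
      · rw [this, f0]
      · intro i b hb
        have hi : i ∈ A := Finset.mem_filter.mpr ⟨Finset.mem_univ _, by rw [hb]; rfl⟩
        have : b = false := by
          have := hAsome i hi; rw [this] at hb; injection hb with h; exact h.symm
        rw [this]; exact hx i hi
  have hBne : B.Nonempty := by
    rcases B.eq_empty_or_nonempty with h | h
    · exfalso
      have : f zero = true := (hBiff zero).mpr (by intro i hi; rw [h] at hi; simp at hi)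
      rw [f0] at this; exact absurd this (by simp)
    · exact h
  have hAne : A.Nonempty := by
    rcases A.eq_empty_or_nonempty with h | h
    · exfalso
      have : f one = false := (hAiff one).mpr (by intro i hi; rw [h] at hi; simp at hi)
      rw [f1] at this; exact absurd this (by simp)
    · exact h
  -- key: for every j ∈ B, every element of A equals j
  have hkey : ∀ j ∈ B, ∀ a ∈ A, a = j := by
    intro j hj a ha
    set y : ι → Bool := fun k => decide (k ≠ j) with hy
    have hyf : f y = false := by
      cases hfy : f y with
      | false => rfl
      | true =>
        have := (hBiff y).mp hfy j hj
        simp [hy] at this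
    have := (hAiff y).mp hyf a ha
    simpa [hy] using this
  obtain ⟨i, hiB⟩ := hBne
  obtain ⟨a, haA⟩ := hAne
  have hai : a = i := hkey i hiB a haA
  have hBsub : ∀ j ∈ B, j = i := by
    intro j hj
    have := hkey j hj a haA
    rw [← this, hai]
  have hAsub : ∀ b ∈ A, b = i := by
    intro b hb; rw [hkey i hiB b hb]
  refine ⟨i, fun x => ?_⟩
  cases hxi : x i with
  | true =>
    exact (hBiff x).mpr (fun j hj => by rw [hBsub j hj]; exact hxi)
  | false =>
    exact (hAiff x).mpr (fun j hj => by rw [hAsub j hj]; exact hxi)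
end Aux3
section Aux4
variable {ι : Type*} [Fintype ι] [DecidableEq ι]

/-- The trivial partition into points. -/
def fullPartition (ι : Type*) : SubcubePartition ι where
  code x i := some (x i)
  self_mem x i b h := by injection h
  compat x y h := by
    have : y = x := funext fun i => h i (x i) rfl
    rw [this]

lemma fullPartition_determines (f : (ι → Bool) → Bool) :
    (fullPartition ι).Determines f := by
  intro x y h
  have : y = x := funext fun i => h i (x i) rfl
  rw [this]

/-- The dictator partition fixing coordinate `i`. -/
def dictPartition (ι : Type*) [DecidableEq ι] (i : ι) : SubcubePartition ι where
  code x j := if j = i then some (x i) else none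
  self_mem x j b h := by
    by_cases hj : j = i
    · simp only [hj, if_pos] at h ⊢; injection h
    · simp only [if_neg hj] at h; exact absurd h (by simp)
  compat x y h := by
    have hy : y i = x i := h i (x i) (by simp)
    funext j
    by_cases hj : j = i <;> simp [hj, hy]

lemma dictPartition_codim (i : ι) (x : ι → Bool) :
    (dictPartition ι i).codim x = 1 := by
  unfold SubcubePartition.codim dictPartition
  have : (Finset.univ.filter fun j =>
      ((if j = i then some (x i) else none : Option Bool)).isSome) = {i} := by
    ext j
    simp only [Finset.mem_filter, Finset.mem_univ, true_and, Finset.mem_singleton]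
    by_cases hj : j = i <;> simp [hj]
  rw [this, Finset.card_singleton]

lemma dictPartition_determines {f : (ι → Bool) → Bool} {i : ι}
    (hdict : ∀ x, f x = x i) : (dictPartition ι i).Determines f := by
  intro x y h
  have hy : y i = x i := h i (x i) (by simp [dictPartition])
  rw [hdict x, hdict y, hy]

lemma expec_le {p : ℝ} (hp0 : 0 < p) (hp1 : p < 1) {g h : (ι → Bool) → ℝ}
    (hg : ∀ x, g x ≤ h x) : expec p g ≤ expec p h :=
  Finset.sum_le_sum fun x _ => mul_le_mul_of_nonneg_left (hg x) (wt_nonneg hp0 hp1 x)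

lemma expec_one {p : ℝ} : expec p (fun _ : ι → Bool => (1 : ℝ)) = 1 := by
  unfold expec
  simp only [mul_one]
  exact sum_wt

lemma expec_nonneg {p : ℝ} (hp0 : 0 < p) (hp1 : p < 1) {g : (ι → Bool) → ℝ}
    (hg : ∀ x, 0 ≤ g x) : 0 ≤ expec p g :=
  Finset.sum_nonneg fun x _ => mul_nonneg (wt_nonneg hp0 hp1 x) (hg x)

end Aux4

/-- for a monotone non-constant `f` and `p ∈ (0,1)`,
`sc(f,π_p) = w(f,π_p)` iff `f` is a dictator. -/
theorem sc_eq_wit_iff_dictator (n : ℕ) (f : (Fin n → Bool) → Bool) (p : ℝ)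
    (hp0 : 0 < p) (hp1 : p < 1)
    (hmono : ∀ x y : Fin n → Bool, (∀ i, x i = true → y i = true) →
      f x = true → f y = true)
    (hnc : ∃ x y, f x ≠ f y) :
    distSC f p = distWit f p ↔ ∃ i : Fin n, ∀ x, f x = x i := by
  classical
  have hSne : {c | ∃ P : SubcubePartition (Fin n), P.Determines f ∧
      c = expec p fun x => (P.codim x : ℝ)}.Nonempty :=
    ⟨_, fullPartition (Fin n), fullPartition_determines f, rfl⟩
  have hSbdd : BddBelow {c | ∃ P : SubcubePartition (Fin n), P.Determines f ∧
      c = expec p fun x => (P.codim x : ℝ)} := by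
    refine ⟨0, ?_⟩
    rintro c ⟨P, hdet, rfl⟩
    exact expec_nonneg hp0 hp1 (fun x => by positivity)
  constructor
  · -- equality implies dictator
    intro hsc
    by_contra hdict
    have hgap : ∀ P : SubcubePartition (Fin n), P.Determines f →
        ∃ x, P.codim x ≠ witAt f x := by
      intro P hdet
      by_contra hall
      push_neg at hall
      exact hdict (dict_of_tight hmono hnc P hdet hall)
    set w0 : ℝ := (min p (1 - p)) ^ (Fintype.card (Fin n)) with hw0
    have hw0pos : 0 < w0 := pow_pos (lt_min hp0 (by linarith)) _
    have hlb : ∀ c ∈ {c | ∃ P : SubcubePartition (Fin n), P.Determines f ∧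
        c = expec p fun x => (P.codim x : ℝ)}, distWit f p + w0 ≤ c := by
      rintro c ⟨P, hdet, rfl⟩
      obtain ⟨x0, hx0⟩ := hgap P hdet
      have hlt : (witAt f x0 : ℝ) + 1 ≤ (P.codim x0 : ℝ) := by
        have : witAt f x0 + 1 ≤ P.codim x0 :=
          Nat.succ_le_of_lt (lt_of_le_of_ne (witAt_le_codim P hdet x0) (Ne.symm hx0))
        exact_mod_cast this
      have key : ∀ x : Fin n → Bool,
          wt p x * (witAt f x : ℝ) + (if x = x0 then wt p x0 else 0)
            ≤ wt p x * (P.codim x : ℝ) := by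
        intro x
        by_cases hx : x = x0
        · subst hx
          rw [if_pos rfl]
          have h1 : wt p x * ((witAt f x : ℝ) + 1) ≤ wt p x * (P.codim x : ℝ) :=
            mul_le_mul_of_nonneg_left hlt (wt_nonneg hp0 hp1 x)
          nlinarith [h1]
        · rw [if_neg hx, add_zero]
          refine mul_le_mul_of_nonneg_left ?_ (wt_nonneg hp0 hp1 x)
          exact_mod_cast witAt_le_codim P hdet x
      have hsum := Finset.sum_le_sum (fun x (_ : x ∈ Finset.univ) => key x)
      rw [Finset.sum_add_distrib,
        Finset.sum_ite_eq' Finset.univ x0 (fun _ => wt p x0)] at hsum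
      simp only [Finset.mem_univ, if_pos] at hsum
      have hwge : w0 ≤ wt p x0 := wt_ge hp0 hp1 x0
      have : distWit f p + wt p x0 ≤ expec p fun x => (P.codim x : ℝ) := hsum
      linarith
    have hge : distWit f p + w0 ≤ distSC f p := le_csInf hSne hlb
    rw [hsc] at hge
    linarith
  · -- dictator implies equality
    rintro ⟨i, hdict⟩
    have hwit1 : ∀ x, witAt f x = 1 := by
      intro x
      have hwitset : IsWitness f x ({i} : Finset (Fin n)) := by
        intro y hy
        rw [hdict y, hdict x, hy i (Finset.mem_singleton_self i)]
      have hle : witAt f x ≤ 1 := by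
        have := witAt_le hwitset
        simpa using this
      have hne : witAt f x ≠ 0 := by
        intro h0
        have hmem : witAt f x ∈ {k | ∃ W : Finset (Fin n), W.card = k ∧ IsWitness f x W} :=
          Nat.sInf_mem ⟨1, {i}, Finset.card_singleton i, hwitset⟩
        obtain ⟨W, hWcard, hWwit⟩ := hmem
        rw [h0] at hWcard
        have hWe : W = ∅ := Finset.card_eq_zero.mp hWcard
        have := hWwit (flipOn x {i}) (by rw [hWe]; intro j hj; simp at hj)
        rw [hdict (flipOn x {i}), hdict x] at this
        have hflip : flipOn x {i} i = !(x i) := by simp [flipOn]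
        rw [hflip] at this
        exact Bool.not_ne_self (x i) this
      omega
    have hW1 : distWit f p = 1 := by
      unfold distWit
      have : (fun x : Fin n → Bool => ((witAt f x : ℕ) : ℝ)) = fun _ => (1 : ℝ) := by
        funext x; rw [hwit1 x]; norm_num
      rw [this, expec_one]
    have hmem1 : (1 : ℝ) ∈ {c | ∃ P : SubcubePartition (Fin n), P.Determines f ∧
        c = expec p fun x => (P.codim x : ℝ)} := by
      refine ⟨dictPartition (Fin n) i, dictPartition_determines hdict, ?_⟩
      have : (fun x : Fin n → Bool => (((dictPartition (Fin n) i).codim x : ℕ) : ℝ))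
          = fun _ => (1 : ℝ) := by
        funext x; rw [dictPartition_codim]; norm_num
      rw [this, expec_one]
    have hle : distSC f p ≤ 1 := csInf_le hSbdd hmem1
    have hge : distWit f p ≤ distSC f p := by
      refine le_csInf hSne ?_
      rintro c ⟨P, hdet, rfl⟩
      unfold distWit
      refine expec_le hp0 hp1 (fun x => ?_)
      exact_mod_cast witAt_le_codim P hdet x
    rw [hW1] at hge ⊢
    linarith
end
end
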